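/- arXiv:1601.00193 — 4 statements merged into one kernel-verified Lean document; each statement's English description precedes it below -/
import Mathlib

section
/- Let Y be a Hilbert space, Y_h ⊂ Y a closed subspace, Z_h ⊂ Y a closed subspace, and P : Y → Z_h the orthogonal projection. Suppose δ ∈ (0,1) is such that ‖y - P y‖ ≤ δ‖y‖ for all y ∈ Y_h. Then for every y ∈ Y_h with y ≠ 0, ‖P y‖ ≥ √(1-δ²)·‖y‖; consequently inf_{y ∈ Y_h, y≠0} sup_{z ∈ Z_h, z≠0} ⟨y, z⟩/(‖y‖‖z‖) ≥ √(1-δ²). -/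
open scoped RealInnerProductSpace

namespace Submodule

variable {E : Type*} [NormedAddCommGroup E] [InnerProductSpace ℝ E]
  (K : Submodule ℝ E) [K.HasOrthogonalProjection]

theorem norm_sq_eq_norm_sub_starProjection_sq_add (y : E) :
    ‖y‖ ^ 2 = ‖y - K.starProjection y‖ ^ 2 + ‖K.starProjection y‖ ^ 2 := by
  rw [K.norm_sq_eq_add_norm_sq_starProjection y, starProjection_orthogonal_val, add_comm]

theorem real_inner_starProjection_right_eq_norm_sq (y : E) :
    ⟪y, K.starProjection y⟫ = ‖K.starProjection y‖ ^ 2 := by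
  rw [← real_inner_self_eq_norm_sq, inner_starProjection_left_eq_right,
    starProjection_eq_self_iff.mpr (K.starProjection_apply_mem y)]

theorem sqrt_one_sub_sq_mul_norm_le_norm_starProjection {δ : ℝ} {y : E}
    (h : ‖y - K.starProjection y‖ ≤ δ * ‖y‖) :
    Real.sqrt (1 - δ ^ 2) * ‖y‖ ≤ ‖K.starProjection y‖ := by
  have hsq : ‖y - K.starProjection y‖ ^ 2 ≤ δ ^ 2 * ‖y‖ ^ 2 := by
    simpa only [mul_pow] using pow_le_pow_left₀ (norm_nonneg _) h 2
  have hproj : (1 - δ ^ 2) * ‖y‖ ^ 2 ≤ ‖K.starProjection y‖ ^ 2 := by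
    linarith [K.norm_sq_eq_norm_sub_starProjection_sq_add y]
  calc Real.sqrt (1 - δ ^ 2) * ‖y‖ = Real.sqrt ((1 - δ ^ 2) * ‖y‖ ^ 2) := by
        rw [Real.sqrt_mul' _ (sq_nonneg _), Real.sqrt_sq (norm_nonneg _)]
    _ ≤ Real.sqrt (‖K.starProjection y‖ ^ 2) := Real.sqrt_le_sqrt hproj
    _ = ‖K.starProjection y‖ := Real.sqrt_sq (norm_nonneg _)

theorem starProjection_ne_zero_of_norm_sub_le {δ : ℝ} (hδ : δ < 1) {y : E} (hy : y ≠ 0)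
    (h : ‖y - K.starProjection y‖ ≤ δ * ‖y‖) : K.starProjection y ≠ 0 := by
  intro h0
  rw [h0, sub_zero] at h
  nlinarith [norm_pos_iff.mpr hy]

theorem mul_norm_mul_norm_starProjection_le_inner {c : ℝ} {y : E}
    (h : c * ‖y‖ ≤ ‖K.starProjection y‖) :
    c * (‖y‖ * ‖K.starProjection y‖) ≤ ⟪y, K.starProjection y⟫ := by
  rw [real_inner_starProjection_right_eq_norm_sq, ← mul_assoc, sq]
  exact mul_le_mul_of_nonneg_right h (norm_nonneg _)

end Submodule

theorem delta_proximal_inf_sup_general {Y : Type*}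
    [NormedAddCommGroup Y] [InnerProductSpace ℝ Y]
    (Yh Zh : Submodule ℝ Y) [CompleteSpace Zh] (δ : ℝ) (hδ1 : δ < 1)
    (hprox : ∀ y ∈ Yh, ‖y - (Submodule.orthogonalProjection Zh y : Y)‖ ≤ δ * ‖y‖) :
    (∀ y ∈ Yh, y ≠ 0 →
      Real.sqrt (1 - δ ^ 2) * ‖y‖ ≤ ‖(Submodule.orthogonalProjection Zh y : Y)‖) ∧
    (∀ y ∈ Yh, y ≠ 0 → ∃ z ∈ Zh, z ≠ 0 ∧
      Real.sqrt (1 - δ ^ 2) * (‖y‖ * ‖z‖) ≤ ⟪y, z⟫) := by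
  simp only [Submodule.coe_orthogonalProjectionOnto_apply] at hprox ⊢
  have hbound (y : Y) (hy : y ∈ Yh) :=
    Zh.sqrt_one_sub_sq_mul_norm_le_norm_starProjection (hprox y hy)
  refine ⟨fun y hy _ ↦ hbound y hy, fun y hy hy0 ↦ ?_⟩
  exact ⟨Zh.starProjection y, Zh.starProjection_apply_mem y,
    Zh.starProjection_ne_zero_of_norm_sub_le hδ1 hy0 (hprox y hy),
    Zh.mul_norm_mul_norm_starProjection_le_inner (hbound y hy)⟩

theorem delta_proximal_inf_sup {Y : Type*}
    [NormedAddCommGroup Y] [InnerProductSpace ℝ Y] [CompleteSpace Y]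
    (Yh Zh : Submodule ℝ Y) [CompleteSpace Zh] (δ : ℝ) (hδ0 : 0 < δ) (hδ1 : δ < 1)
    (hprox : ∀ y ∈ Yh, ‖y - (Submodule.orthogonalProjection Zh y : Y)‖ ≤ δ * ‖y‖) :
    (∀ y ∈ Yh, y ≠ 0 →
      Real.sqrt (1 - δ ^ 2) * ‖y‖ ≤ ‖(Submodule.orthogonalProjection Zh y : Y)‖) ∧
    (∀ y ∈ Yh, y ≠ 0 → ∃ z ∈ Zh, z ≠ 0 ∧
      Real.sqrt (1 - δ ^ 2) * (‖y‖ * ‖z‖) ≤ ⟪y, z⟫) :=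
  delta_proximal_inf_sup_general Yh Zh δ hδ1 hprox
end

section
/- Let X, Y be Hilbert spaces and A : X → Y' a bijective linear isometry with adjoint A* : Y → X. Let X_h ⊂ X be a closed subspace, Z_h ⊂ Y a closed subspace, and P : Y → Z_h the Y-orthogonal projection. Assume δ ∈ (0,1) is such that ‖y - Py‖_Y ≤ δ‖y‖_Y for all y ∈ A^{-*}X_h. If u ∈ X solves Au = f and u_h ∈ X_h satisfies ⟨f - Au_h, v⟩ = 0 for all v in the test space P(A^{-*}X_h), then ‖u - u_h‖_X ≤ (1-δ)^{-1} · inf_{w ∈ X_h} ‖u - w‖_X. -/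
/-!
Pull the Galerkin orthogonality back to `X` through `A*`: every `x ∈ X_h` equals `A* y` for some `y`,
and `t = A* (P y)` is a test vector orthogonal to the error `u - u_h` with `‖t‖ ≤ ‖x‖` and
`‖x - t‖ ≤ δ ‖x‖`. Testing with `x = u_h - w` gives `(1 - δ) ‖u_h - w‖ ≤ ‖u - w‖`; testing with
`x = w - u_h` in `‖u - u_h‖² = ⟪u - u_h, u - w⟫ + ⟪u - u_h, w - u_h⟫` gives
`‖u - u_h‖ ≤ ‖u - w‖ + δ ‖u_h - w‖`, and the two combine to the factor `(1 - δ)⁻¹`.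
-/

open scoped RealInnerProductSpace

theorem ContinuousLinearMap.surjective_of_norm_map_of_inner_eq_zero {𝕜 X Y : Type*} [RCLike 𝕜]
    [NormedAddCommGroup X] [InnerProductSpace 𝕜 X] [NormedAddCommGroup Y] [NormedSpace 𝕜 Y]
    [CompleteSpace Y] (T : Y →L[𝕜] X) (hT : ∀ y, ‖T y‖ = ‖y‖)
    (hdense : ∀ x, (∀ y, inner 𝕜 x (T y) = 0) → x = 0) : Function.Surjective T := by
  have hcomplete : IsComplete ((LinearMap.range (T : Y →ₗ[𝕜] X)) : Set X) := by
    rw [LinearMap.coe_range]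
    exact (AddMonoidHomClass.isometry_of_norm T hT).isUniformInducing.isComplete_range
  have := hcomplete.completeSpace_coe
  have horth : (LinearMap.range (T : Y →ₗ[𝕜] X))ᗮ = ⊥ := by
    refine (Submodule.eq_bot_iff _).2 fun x hx => hdense x fun y => ?_
    exact (Submodule.mem_orthogonal' _ _).1 hx _ ⟨y, rfl⟩
  exact LinearMap.range_eq_top.1 (Submodule.orthogonal_eq_bot_iff.1 horth)

section QuasiOptimality

variable {X : Type*} [NormedAddCommGroup X] [InnerProductSpace ℝ X] {δ : ℝ}

theorem norm_le_of_inner_sub_eq_zero_of_norm_sub_le {x v t : X} (hδ : δ < 1)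
    (hxv : ⟪x - v, t⟫ = 0) (ht : ‖t‖ ≤ ‖x‖) (hxt : ‖x - t‖ ≤ δ * ‖x‖) :
    ‖x‖ ≤ (1 - δ)⁻¹ * ‖v‖ := by
  have hsq : ‖x‖ ^ 2 ≤ δ * ‖x‖ ^ 2 + ‖v‖ * ‖x‖ :=
    calc ‖x‖ ^ 2 = ⟪x, x - t⟫ + ⟪v, t⟫ := by
          rw [inner_sub_left, sub_eq_zero] at hxv
          rw [← hxv, ← inner_add_right, sub_add_cancel, real_inner_self_eq_norm_sq]
      _ ≤ ‖x‖ * ‖x - t‖ + ‖v‖ * ‖t‖ :=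
          add_le_add (real_inner_le_norm _ _) (real_inner_le_norm _ _)
      _ ≤ ‖x‖ * (δ * ‖x‖) + ‖v‖ * ‖x‖ := by gcongr
      _ = δ * ‖x‖ ^ 2 + ‖v‖ * ‖x‖ := by ring
  rw [le_inv_mul_iff₀ (by linarith)]
  nlinarith [norm_nonneg x, norm_nonneg v]

theorem norm_add_le_of_inner_eq_zero_of_norm_sub_le {v x t : X}
    (hvx : ⟪v + x, t⟫ = 0) (hxt : ‖x - t‖ ≤ δ * ‖x‖) :
    ‖v + x‖ ≤ ‖v‖ + δ * ‖x‖ := by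
  have hsq : ‖v + x‖ ^ 2 ≤ ‖v + x‖ * (‖v‖ + δ * ‖x‖) :=
    calc ‖v + x‖ ^ 2 = ⟪v + x, v⟫ + ⟪v + x, x - t⟫ := by
          rw [inner_sub_right, hvx, sub_zero, ← inner_add_right, real_inner_self_eq_norm_sq]
      _ ≤ ‖v + x‖ * ‖v‖ + ‖v + x‖ * ‖x - t‖ :=
          add_le_add (real_inner_le_norm _ _) (real_inner_le_norm _ _)
      _ ≤ ‖v + x‖ * (‖v‖ + δ * ‖x‖) := by rw [← mul_add]; gcongr
  nlinarith [norm_nonneg (v + x), norm_nonneg v, norm_nonneg (x - t)]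

theorem norm_sub_le_of_forall_exists_orthogonal_near {V : Submodule ℝ X} {u uh w : X}
    (hδ0 : 0 ≤ δ) (hδ1 : δ < 1) (huh : uh ∈ V) (hw : w ∈ V)
    (htest : ∀ x ∈ V, ∃ t, ⟪u - uh, t⟫ = 0 ∧ ‖t‖ ≤ ‖x‖ ∧ ‖x - t‖ ≤ δ * ‖x‖) :
    ‖u - uh‖ ≤ (1 - δ)⁻¹ * ‖u - w‖ := by
  obtain ⟨t, ht, htn, hxt⟩ := htest (uh - w) (V.sub_mem huh hw)
  have hdiscrete : ‖uh - w‖ ≤ (1 - δ)⁻¹ * ‖u - w‖ := by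
    refine norm_le_of_inner_sub_eq_zero_of_norm_sub_le hδ1 ?_ htn hxt
    rw [show uh - w - (u - w) = -(u - uh) by abel, inner_neg_left, ht, neg_zero]
  obtain ⟨s, hs, -, hxs⟩ := htest (w - uh) (V.sub_mem hw huh)
  have hsplit := norm_add_le_of_inner_eq_zero_of_norm_sub_le
    (v := u - w) (by rwa [sub_add_sub_cancel]) hxs
  rw [sub_add_sub_cancel, norm_sub_rev w] at hsplit
  calc ‖u - uh‖ ≤ ‖u - w‖ + δ * ((1 - δ)⁻¹ * ‖u - w‖) := hsplit.trans (by gcongr)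
    _ = (1 - δ)⁻¹ * ‖u - w‖ := by field_simp [show 1 - δ ≠ 0 by linarith]; ring

end QuasiOptimality

theorem petrov_galerkin_quasi_optimality_general {X Y : Type*}
    [NormedAddCommGroup X] [InnerProductSpace ℝ X]
    [NormedAddCommGroup Y] [InnerProductSpace ℝ Y] [CompleteSpace Y]
    (A : X ≃ₗᵢ[ℝ] StrongDual ℝ Y) (Astar : Y →L[ℝ] X)
    (hAstar : ∀ (w : X) (y : Y), A w y = ⟪w, Astar y⟫)
    (hiso : ∀ y : Y, ‖Astar y‖ = ‖y‖)
    (Xh : Submodule ℝ X) (Zh : Submodule ℝ Y) [CompleteSpace Zh]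
    (δ : ℝ) (hδ0 : 0 < δ) (hδ1 : δ < 1)
    (hprox : ∀ y : Y, Astar y ∈ Xh →
      ‖y - (Zh.orthogonalProjectionOnto y : Y)‖ ≤ δ * ‖y‖)
    (u : X) (f : StrongDual ℝ Y) (hu : A u = f)
    (uh : X) (huh : uh ∈ Xh)
    (hPG : ∀ y : Y, Astar y ∈ Xh →
      (f - A uh) ((Zh.orthogonalProjectionOnto y : Y)) = 0) :
    ∀ w ∈ Xh, ‖u - uh‖ ≤ (1 - δ)⁻¹ * ‖u - w‖ := by
  intro w hw
  have hsurj : Function.Surjective Astar :=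
    Astar.surjective_of_norm_map_of_inner_eq_zero hiso fun x hx =>
      A.injective <| by ext y; rw [map_zero, hAstar, hx]; rfl
  refine norm_sub_le_of_forall_exists_orthogonal_near hδ0.le hδ1 huh hw fun x hx => ?_
  obtain ⟨y, rfl⟩ := hsurj x
  refine ⟨Astar (Zh.orthogonalProjectionOnto y), ?_, ?_, ?_⟩
  · rw [inner_sub_left, ← hAstar, ← hAstar, hu, ← sub_apply]
    exact hPG y hx
  · rw [hiso, hiso]
    exact Zh.norm_orthogonalProjectionOnto_apply_le y
  · rw [← map_sub, hiso, hiso]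
    exact hprox y hx

theorem petrov_galerkin_quasi_optimality {X Y : Type*}
    [NormedAddCommGroup X] [InnerProductSpace ℝ X] [CompleteSpace X]
    [NormedAddCommGroup Y] [InnerProductSpace ℝ Y] [CompleteSpace Y]
    (A : X ≃ₗᵢ[ℝ] StrongDual ℝ Y) (Astar : Y →L[ℝ] X)
    (hAstar : ∀ (w : X) (y : Y), A w y = ⟪w, Astar y⟫)
    (hiso : ∀ y : Y, ‖Astar y‖ = ‖y‖)
    (Xh : Submodule ℝ X) (Zh : Submodule ℝ Y) [CompleteSpace Zh]
    (δ : ℝ) (hδ0 : 0 < δ) (hδ1 : δ < 1)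
    (hprox : ∀ y : Y, Astar y ∈ Xh →
      ‖y - (Zh.orthogonalProjectionOnto y : Y)‖ ≤ δ * ‖y‖)
    (u : X) (f : StrongDual ℝ Y) (hu : A u = f)
    (uh : X) (huh : uh ∈ Xh)
    (hPG : ∀ y : Y, Astar y ∈ Xh →
      (f - A uh) ((Zh.orthogonalProjectionOnto y : Y)) = 0) :
    ∀ w ∈ Xh, ‖u - uh‖ ≤ (1 - δ)⁻¹ * ‖u - w‖ :=
  petrov_galerkin_quasi_optimality_general A Astar hAstar hiso Xh Zh δ hδ0 hδ1 hprox u f hu uh huh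
    hPG
end

section
/- Under the assumptions of the δ-proximal Petrov–Galerkin setting, the Uzawa iteration contracts with factor δ: if u_h is the solution component of the saddle point problem and u_h^{k+1} is obtained from u_h^k by one Uzawa step (solving (A*r_h^k, A*z)_X = (f - Au_h^k)(z) for r_h^k ∈ Z_h, then updating (u_h^{k+1}, v)_X = (u_h^k, v)_X + (A*r_h^k, v)_X for v ∈ X_h), then ‖u_h - u_h^{k+1}‖_X ≤ δ·‖u_h - u_h^k‖_X. -/
open scoped RealInnerProductSpace

/-!
Since `A*` is an isometry and `A` is injective, the range of `A*` is closed with trivial orthogonal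
complement, so `A*` is onto and the error is `u_h - u_h^k = A* y`. Subtracting the residual
equations shows `r_h^k - r_h = P_{Z_h} y`, and subtracting the update equations shows that
`u_h - u_h^{k+1} ∈ X_h` represents `A* (y - P_{Z_h} y)` on `X_h`, hence has norm at most
`‖y - P_{Z_h} y‖ ≤ δ ‖y‖ = δ ‖u_h - u_h^k‖` by proximality.
-/

theorem LinearIsometry.surjective_of_orthogonal_range_eq_bot {𝕜 E F : Type*} [RCLike 𝕜]
    [NormedAddCommGroup E] [InnerProductSpace 𝕜 E] [NormedAddCommGroup F] [NormedSpace 𝕜 F]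
    [CompleteSpace F] (T : F →ₗᵢ[𝕜] E) (h : T.rangeᗮ = ⊥) :
    Function.Surjective T := by
  have : CompleteSpace T.range := T.isometry.isUniformInducing.isComplete_range.completeSpace_coe
  exact LinearMap.range_eq_top.mp (Submodule.orthogonal_eq_bot_iff.mp h)

theorem norm_le_of_mem_of_inner_eq {E : Type*} [NormedAddCommGroup E] [InnerProductSpace ℝ E]
    {K : Submodule ℝ E} {u w : E} (hu : u ∈ K) (h : ∀ v ∈ K, ⟪u, v⟫ = ⟪w, v⟫) :
    ‖u‖ ≤ ‖w‖ := by
  have hsq : ‖u‖ ^ 2 ≤ ‖w‖ * ‖u‖ := by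
    rw [← real_inner_self_eq_norm_sq, h u hu]
    exact real_inner_le_norm w u
  nlinarith [norm_nonneg u, norm_nonneg w]

section Uzawa

variable {X Y : Type*} [NormedAddCommGroup X] [InnerProductSpace ℝ X]
  [NormedAddCommGroup Y] [InnerProductSpace ℝ Y]
  {A : X →ₗ[ℝ] StrongDual ℝ Y} {T : Y →ₗᵢ[ℝ] X}

theorem orthogonal_range_eq_bot_of_apply_eq_inner (hA : Function.Injective A)
    (hAT : ∀ (w : X) (y : Y), A w y = ⟪w, T y⟫) : T.rangeᗮ = ⊥ := by
  refine (Submodule.eq_bot_iff _).mpr fun x hx ↦ hA ?_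
  ext y
  rw [hAT, real_inner_comm, map_zero, zero_apply]
  exact hx (T y) ⟨y, rfl⟩

theorem uzawa_residual_eq_orthogonalProjection (hAT : ∀ (w : X) (y : Y), A w y = ⟪w, T y⟫)
    {Zh : Submodule ℝ Y} [Zh.HasOrthogonalProjection] {f : StrongDual ℝ Y} {uh uhk : X}
    {rh rhk y : Y} (hrh : rh ∈ Zh) (hrhk : rhk ∈ Zh)
    (hsaddle1 : ∀ z ∈ Zh, ⟪T rh, T z⟫ + A uh z = f z)
    (hstep1 : ∀ z ∈ Zh, ⟪T rhk, T z⟫ = (f - A uhk) z) (hy : T y = uh - uhk) :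
    (Zh.orthogonalProjectionOnto y : Y) = rhk - rh := by
  refine Submodule.eq_starProjection_of_mem_of_inner_eq_zero (sub_mem hrhk hrh) fun z hz ↦ ?_
  have hy_inner : ⟪y, z⟫ = A uh z - A uhk z := by
    rw [← T.inner_map_map, hy, ← hAT, map_sub, sub_apply]
  have hrh_inner := hsaddle1 z hz
  have hrhk_inner := hstep1 z hz
  rw [T.inner_map_map] at hrh_inner hrhk_inner
  rw [sub_apply] at hrhk_inner
  rw [inner_sub_left, inner_sub_left, hy_inner]
  linarith

theorem uzawa_error_inner_eq (hAT : ∀ (w : X) (y : Y), A w y = ⟪w, T y⟫) {Xh : Submodule ℝ X}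
    {uh uhk uhk1 : X} {rh rhk y : Y} (hsaddle2 : ∀ v ∈ Xh, A v rh = 0)
    (hstep2 : ∀ v ∈ Xh, ⟪uhk1, v⟫ = ⟪uhk, v⟫ + ⟪T rhk, v⟫) (hy : T y = uh - uhk) :
    ∀ v ∈ Xh, ⟪uh - uhk1, v⟫ = ⟪T (y - (rhk - rh)), v⟫ := by
  intro v hv
  have hrh_perp : ⟪T rh, v⟫ = 0 := by
    rw [real_inner_comm, ← hAT]
    exact hsaddle2 v hv
  rw [map_sub, map_sub, hy, inner_sub_left, inner_sub_left, inner_sub_left, inner_sub_left,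
    hstep2 v hv, hrh_perp]
  ring

end Uzawa

theorem uzawa_contraction_general {X Y : Type*}
    [NormedAddCommGroup X] [InnerProductSpace ℝ X]
    [NormedAddCommGroup Y] [InnerProductSpace ℝ Y] [CompleteSpace Y]
    (A : X ≃ₗᵢ[ℝ] StrongDual ℝ Y) (Astar : Y →L[ℝ] X)
    (hAstar : ∀ (w : X) (y : Y), A w y = ⟪w, Astar y⟫)
    (hiso : ∀ y : Y, ‖Astar y‖ = ‖y‖)
    (Xh : Submodule ℝ X) (Zh : Submodule ℝ Y) [CompleteSpace Zh]
    (δ : ℝ)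
    (hprox : ∀ y : Y, Astar y ∈ Xh →
      ‖y - (Zh.orthogonalProjectionOnto y : Y)‖ ≤ δ * ‖y‖)
    (f : StrongDual ℝ Y)
    -- the saddle point solution (u_h, r_h)
    (uh : X) (huh : uh ∈ Xh) (rh : Y) (hrh : rh ∈ Zh)
    (hsaddle1 : ∀ z ∈ Zh, ⟪Astar rh, Astar z⟫ + A uh z = f z)
    (hsaddle2 : ∀ v ∈ Xh, A v rh = 0)
    -- one Uzawa step from u_h^k to u_h^{k+1}
    (uhk : X) (huhk : uhk ∈ Xh) (rhk : Y) (hrhk : rhk ∈ Zh)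
    (hstep1 : ∀ z ∈ Zh, ⟪Astar rhk, Astar z⟫ = (f - A uhk) z)
    (uhk1 : X) (huhk1 : uhk1 ∈ Xh)
    (hstep2 : ∀ v ∈ Xh, ⟪uhk1, v⟫ = ⟪uhk, v⟫ + ⟪Astar rhk, v⟫) :
    ‖uh - uhk1‖ ≤ δ * ‖uh - uhk‖ := by
  let T : Y →ₗᵢ[ℝ] X := ⟨Astar.toLinearMap, hiso⟩
  have hAT : ∀ (w : X) (y : Y), A.toLinearMap w y = ⟪w, T y⟫ := hAstar
  obtain ⟨y, hy⟩ := T.surjective_of_orthogonal_range_eq_bot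
    (orthogonal_range_eq_bot_of_apply_eq_inner A.injective hAT) (uh - uhk)
  have hproj : (Zh.orthogonalProjectionOnto y : Y) = rhk - rh :=
    uzawa_residual_eq_orthogonalProjection hAT hrh hrhk hsaddle1 hstep1 hy
  calc ‖uh - uhk1‖ ≤ ‖T (y - (rhk - rh))‖ :=
        norm_le_of_mem_of_inner_eq (sub_mem huh huhk1)
          (uzawa_error_inner_eq hAT hsaddle2 hstep2 hy)
    _ = ‖y - (Zh.orthogonalProjectionOnto y : Y)‖ := by rw [T.norm_map, hproj]
    _ ≤ δ * ‖y‖ := hprox y (hy ▸ sub_mem huh huhk)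
    _ = δ * ‖uh - uhk‖ := by rw [← T.norm_map, hy]

theorem uzawa_contraction {X Y : Type*}
    [NormedAddCommGroup X] [InnerProductSpace ℝ X] [CompleteSpace X]
    [NormedAddCommGroup Y] [InnerProductSpace ℝ Y] [CompleteSpace Y]
    (A : X ≃ₗᵢ[ℝ] StrongDual ℝ Y) (Astar : Y →L[ℝ] X)
    (hAstar : ∀ (w : X) (y : Y), A w y = ⟪w, Astar y⟫)
    (hiso : ∀ y : Y, ‖Astar y‖ = ‖y‖)
    (Xh : Submodule ℝ X) (Zh : Submodule ℝ Y) [CompleteSpace Zh]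
    (δ : ℝ) (hδ0 : 0 < δ) (hδ1 : δ < 1)
    (hprox : ∀ y : Y, Astar y ∈ Xh →
      ‖y - (Zh.orthogonalProjectionOnto y : Y)‖ ≤ δ * ‖y‖)
    (f : StrongDual ℝ Y)
    -- the saddle point solution (u_h, r_h)
    (uh : X) (huh : uh ∈ Xh) (rh : Y) (hrh : rh ∈ Zh)
    (hsaddle1 : ∀ z ∈ Zh, ⟪Astar rh, Astar z⟫ + A uh z = f z)
    (hsaddle2 : ∀ v ∈ Xh, A v rh = 0)
    -- one Uzawa step from u_h^k to u_h^{k+1}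
    (uhk : X) (huhk : uhk ∈ Xh) (rhk : Y) (hrhk : rhk ∈ Zh)
    (hstep1 : ∀ z ∈ Zh, ⟪Astar rhk, Astar z⟫ = (f - A uhk) z)
    (uhk1 : X) (huhk1 : uhk1 ∈ Xh)
    (hstep2 : ∀ v ∈ Xh, ⟪uhk1, v⟫ = ⟪uhk, v⟫ + ⟪Astar rhk, v⟫) :
    ‖uh - uhk1‖ ≤ δ * ‖uh - uhk‖ :=
  uzawa_contraction_general A Astar hAstar hiso Xh Zh δ hprox f uh huh rh hrh hsaddle1 hsaddle2 uhk
    huhk rhk hrhk hstep1 uhk1 huhk1 hstep2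
end

section
/- Let X, Y be Hilbert spaces, A : X → Y' a bijective isometry with ‖v‖_Y = ‖A*v‖_X, and suppose Z_h ⊂ Y is δ-proximal for a subspace containing v_h and A^{-1}f_h, with δ ∈ (0,1). Define the lifted residual r_h ∈ Z_h by (A*r_h, A*z)_X = ⟨f_h - Av_h, z⟩ for all z ∈ Z_h. Then (1-δ)·‖f_h - Av_h‖_{Y'} ≤ ‖r_h‖_Y ≤ ‖f_h - Av_h‖_{Y'}. -/
/-!
The residual `ρ = f_h - A v_h` has a Riesz representative `r ∈ Y` with `‖r‖ = ‖ρ‖`. Since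
`A ∘ A*` is the Riesz map, `A* r = A⁻¹ f_h - v_h ∈ W`, so δ-proximality applies to `r`, and the
Galerkin equation says exactly that `r_h` is the orthogonal projection of `r` onto `Z_h`. The two
bounds are then `‖P r‖ ≤ ‖r‖` and `‖r‖ ≤ ‖P r‖ + ‖r - P r‖ ≤ ‖P r‖ + δ ‖r‖`.
-/

open scoped RealInnerProductSpace

theorem one_sub_mul_norm_le_norm_of_norm_sub_le {E : Type*} [SeminormedAddCommGroup E]
    {x y : E} {δ : ℝ} (h : ‖x - y‖ ≤ δ * ‖x‖) : (1 - δ) * ‖x‖ ≤ ‖y‖ := by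
  linarith [norm_sub_norm_le x y]

theorem Submodule.starProjection_toDual_symm_eq {𝕜 E : Type*} [RCLike 𝕜]
    [NormedAddCommGroup E] [InnerProductSpace 𝕜 E] [CompleteSpace E]
    (K : Submodule 𝕜 E) [K.HasOrthogonalProjection] {ℓ : StrongDual 𝕜 E} {u : E} (hu : u ∈ K)
    (hℓ : ∀ z ∈ K, inner 𝕜 u z = ℓ z) :
    K.starProjection ((InnerProductSpace.toDual 𝕜 E).symm ℓ) = u :=
  K.eq_starProjection_of_mem_of_inner_eq_zero hu fun z hz ↦ by
    rw [inner_sub_left, InnerProductSpace.toDual_symm_apply, hℓ z hz, sub_self]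

section RieszLift

variable {X Y : Type*} [NormedAddCommGroup X] [InnerProductSpace ℝ X]
  [NormedAddCommGroup Y] [InnerProductSpace ℝ Y] [CompleteSpace Y]
  {A : X → StrongDual ℝ Y} {Astar : Y →L[ℝ] X}

theorem apply_apply_eq_toDual (hAstar : ∀ (w : X) (y : Y), A w y = ⟪w, Astar y⟫)
    (hiso : ∀ y : Y, ‖Astar y‖ = ‖y‖) (y : Y) :
    A (Astar y) = InnerProductSpace.toDual ℝ Y y := by
  ext z
  rw [hAstar, (LinearMap.norm_map_iff_inner_map_map Astar).mp hiso,
    InnerProductSpace.toDual_apply_apply]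

theorem apply_toDual_symm_apply (hA : Function.Injective A)
    (hAstar : ∀ (w : X) (y : Y), A w y = ⟪w, Astar y⟫) (hiso : ∀ y : Y, ‖Astar y‖ = ‖y‖)
    (e : X) : Astar ((InnerProductSpace.toDual ℝ Y).symm (A e)) = e :=
  hA <| by rw [apply_apply_eq_toDual hAstar hiso, LinearIsometryEquiv.apply_symm_apply]

end RieszLift

theorem lifted_residual_estimator_general {X Y : Type*}
    [NormedAddCommGroup X] [InnerProductSpace ℝ X]
    [NormedAddCommGroup Y] [InnerProductSpace ℝ Y] [CompleteSpace Y]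
    (A : X ≃ₗᵢ[ℝ] StrongDual ℝ Y) (Astar : Y →L[ℝ] X)
    (hAstar : ∀ (w : X) (y : Y), A w y = ⟪w, Astar y⟫)
    (hiso : ∀ y : Y, ‖Astar y‖ = ‖y‖)
    (W : Submodule ℝ X) (Zh : Submodule ℝ Y) [CompleteSpace Zh]
    (δ : ℝ)
    (hprox : ∀ y : Y, Astar y ∈ W →
      ‖y - (Zh.orthogonalProjectionOnto y : Y)‖ ≤ δ * ‖y‖)
    (vh : X) (fh : StrongDual ℝ Y)
    (hvh : vh ∈ W) (hfh : A.symm fh ∈ W)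
    (rh : Y) (hrh : rh ∈ Zh)
    (hlift : ∀ z ∈ Zh, ⟪Astar rh, Astar z⟫ = (fh - A vh) z) :
    (1 - δ) * ‖fh - A vh‖ ≤ ‖rh‖ ∧ ‖rh‖ ≤ ‖fh - A vh‖ := by
  set r := (InnerProductSpace.toDual ℝ Y).symm (fh - A vh)
  have hnorm : ‖fh - A vh‖ = ‖r‖ := (LinearIsometryEquiv.norm_map _ _).symm
  have hr : Astar r = A.symm fh - vh := by
    rw [← apply_toDual_symm_apply A.injective hAstar hiso (A.symm fh - vh), map_sub,
      A.apply_symm_apply]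
  have hproj : Zh.starProjection r = rh := Zh.starProjection_toDual_symm_eq hrh fun z hz ↦ by
    rw [← hlift z hz, (LinearMap.norm_map_iff_inner_map_map Astar).mp hiso]
  rw [hnorm, ← hproj]
  exact ⟨one_sub_mul_norm_le_norm_of_norm_sub_le (hprox r (hr ▸ W.sub_mem hfh hvh)), Zh.norm_starProjection_apply_le r⟩

theorem lifted_residual_estimator {X Y : Type*}
    [NormedAddCommGroup X] [InnerProductSpace ℝ X] [CompleteSpace X]
    [NormedAddCommGroup Y] [InnerProductSpace ℝ Y] [CompleteSpace Y]
    (A : X ≃ₗᵢ[ℝ] StrongDual ℝ Y) (Astar : Y →L[ℝ] X)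
    (hAstar : ∀ (w : X) (y : Y), A w y = ⟪w, Astar y⟫)
    (hiso : ∀ y : Y, ‖Astar y‖ = ‖y‖)
    (W : Submodule ℝ X) (Zh : Submodule ℝ Y) [CompleteSpace Zh]
    (δ : ℝ) (hδ0 : 0 < δ) (hδ1 : δ < 1)
    (hprox : ∀ y : Y, Astar y ∈ W →
      ‖y - (Zh.orthogonalProjectionOnto y : Y)‖ ≤ δ * ‖y‖)
    (vh : X) (fh : StrongDual ℝ Y)
    (hvh : vh ∈ W) (hfh : A.symm fh ∈ W)
    (rh : Y) (hrh : rh ∈ Zh)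
    (hlift : ∀ z ∈ Zh, ⟪Astar rh, Astar z⟫ = (fh - A vh) z) :
    (1 - δ) * ‖fh - A vh‖ ≤ ‖rh‖ ∧ ‖rh‖ ≤ ‖fh - A vh‖ :=
  lifted_residual_estimator_general A Astar hAstar hiso W Zh δ hprox vh fh hvh hfh rh hrh hlift
end
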